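/- arXiv:1403.3173 — 2 statements merged into one kernel-verified Lean document; each statement's English description precedes it below -/
import Mathlib

section
/- Assume E(|u|²) < ∞ μ-a.e. Then the following are equivalent: (a) D(EM_u) = {f ∈ L²(μ) : ū·(P f) ∈ L²(μ)} and EM_u f = ū·(P f) μ-a.e. for every f ∈ D(EM_u) (i.e., the densely defined operator EM_u is self-adjoint); (b) u is μ-a.e. equal to a real-valued 𝒜-measurable function. -/
open MeasureTheory Filter ENNReal NNReal

noncomputable section

variable {X : Type*}

/-- A set `A` in the sub-σ-algebra `m` is *admissible* for the weight `u` if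
`μ A + ∫_A |u|² dμ < ∞`. -/
def Admissible (m : MeasurableSpace X) [m0 : MeasurableSpace X] (μ : Measure X)
    (u : X → ℂ) (A : Set X) : Prop :=
  MeasurableSet[m] A ∧ μ A + ∫⁻ x in A, (‖u x‖₊ : ℝ≥0∞) ^ 2 ∂μ < ⊤

/-- `gf` is a version of `E(u·f)`, i.e. `gf` is an `m`-measurable function in `L²(μ)` with
`∫_A u·f dμ = ∫_A gf dμ` for every admissible `A`.  `f ∈ D(EM_u)` iff `f ∈ L²(μ)` and such a
`gf` exists. -/
def IsWCE (m : MeasurableSpace X) [m0 : MeasurableSpace X] (μ : Measure X)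
    (u f gf : X → ℂ) : Prop :=
  StronglyMeasurable[m] gf ∧ MemLp gf 2 μ ∧
    ∀ A : Set X, Admissible m μ u A → ∫ x in A, u x * f x ∂μ = ∫ x in A, gf x ∂μ


/-!
If `u = v` a.e. with `v` real and `m`-measurable, then for every admissible `A` the function
`1_A v` is an `m`-measurable element of `L²`, hence orthogonal to `f - P f`; so
`∫_A u f = ∫_A v · P f`, and since admissible sets exhaust `X` up to a null set, every
`E(u f)` equals `ū · P f`.

Conversely, `E(|u|²) < ∞` a.e. provides an `m`-measurable weight `w > 0` a.e. with
`w, u w ∈ L²`: take `w² = h / (1 + E(|u|²))` for a positive `m`-measurable integrable `h`.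
Self-adjointness applied to `f = w = P w` gives `E(u w) = ū w`. Its conjugate `u w` is then
`m`-measurable, in `L²`, and has the same integrals over admissible sets as `E(u w)`, so
`E(u w)` is real and `u = E(u w) / w`.
-/

open ComplexConjugate

theorem memLp_two_of_lintegral_enorm_sq_lt_top {E : Type*} [NormedAddCommGroup E]
    [MeasurableSpace X] {μ : Measure X} {f : X → E} (hf : AEStronglyMeasurable f μ)
    (h : ∫⁻ x, ‖f x‖ₑ ^ 2 ∂μ < ⊤) : MemLp f 2 μ := by
  refine ⟨hf, ?_⟩
  rw [eLpNorm_lt_top_iff_lintegral_rpow_enorm_lt_top two_ne_zero ofNat_ne_top]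
  simpa using h

theorem enorm_ofReal_sqrt_toReal_sq {r : ℝ≥0∞} (hr : r ≠ ⊤) : ‖((√r.toReal : ℝ) : ℂ)‖ₑ ^ 2 = r := by
  rw [← ofReal_norm, Complex.norm_real, Real.norm_of_nonneg (Real.sqrt_nonneg _),
    ← ofReal_pow (Real.sqrt_nonneg _), Real.sq_sqrt toReal_nonneg, ofReal_toReal hr]

section

variable {m : MeasurableSpace X} [m0 : MeasurableSpace X] {μ : Measure X}

theorem lintegral_mul_eq_of_forall_setLIntegral_eq (hm : m ≤ m0) {f₁ f₂ φ : X → ℝ≥0∞}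
    (hf₁ : Measurable f₁) (hf₂ : Measurable f₂)
    (h : ∀ A, MeasurableSet[m] A → ∫⁻ x in A, f₁ x ∂μ = ∫⁻ x in A, f₂ x ∂μ)
    (hφ : Measurable[m] φ) : ∫⁻ x, f₁ x * φ x ∂μ = ∫⁻ x, f₂ x * φ x ∂μ := by
  have htrim : (μ.withDensity f₁).trim hm = (μ.withDensity f₂).trim hm := by
    refine @Measure.ext _ m _ _ fun A hA => ?_
    rw [trim_measurableSet_eq hm hA, trim_measurableSet_eq hm hA, withDensity_apply _ (hm A hA),
      withDensity_apply _ (hm A hA), h A hA]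
  have hφ₀ : Measurable φ := hφ.mono hm le_rfl
  calc ∫⁻ x, f₁ x * φ x ∂μ = ∫⁻ x, φ x ∂(μ.withDensity f₁).trim hm := by
        rw [lintegral_trim hm hφ, lintegral_withDensity_eq_lintegral_mul _ hf₁ hφ₀]; rfl
    _ = ∫⁻ x, f₂ x * φ x ∂μ := by
        rw [htrim, lintegral_trim hm hφ, lintegral_withDensity_eq_lintegral_mul _ hf₂ hφ₀]; rfl

theorem exists_pos_lintegral_one_add_mul_lt_top (hm : m ≤ m0) [SigmaFinite (μ.trim hm)]
    {U g : X → ℝ≥0∞} (hU : Measurable U) (hgm : Measurable[m] g)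
    (hg : ∀ A, MeasurableSet[m] A → ∫⁻ x in A, U x ∂μ = ∫⁻ x in A, g x ∂μ)
    (hgfin : ∀ᵐ x ∂μ, g x < ⊤) :
    ∃ W : X → ℝ≥0∞, Measurable[m] W ∧ (∀ x, W x ≠ ⊤) ∧ (∀ᵐ x ∂μ, 0 < W x) ∧
      ∫⁻ x, (1 + U x) * W x ∂μ < ⊤ := by
  obtain ⟨h, hpos, hmeas, hint⟩ :=
    @exists_pos_lintegral_lt_of_sigmaFinite _ m (μ.trim hm) _ _ one_ne_zero
  have hW : Measurable[m] fun x => (h x : ℝ≥0∞) / (1 + g x) :=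
    hmeas.coe_nnreal_ennreal.div (measurable_const.add hgm)
  refine ⟨_, hW, fun x => div_ne_top coe_ne_top (by simp), ?_, ?_⟩
  · filter_upwards [hgfin] with x hx
    exact ENNReal.div_pos (by exact_mod_cast (hpos x).ne') (add_ne_top.2 ⟨one_ne_top, hx.ne⟩)
  · have hg' : ∀ A, MeasurableSet[m] A →
        ∫⁻ x in A, 1 + U x ∂μ = ∫⁻ x in A, 1 + g x ∂μ := fun A hA => by
      rw [lintegral_add_left measurable_const, lintegral_add_left measurable_const, hg A hA]
    calc ∫⁻ x, (1 + U x) * (h x / (1 + g x)) ∂μ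
        = ∫⁻ x, (1 + g x) * (h x / (1 + g x)) ∂μ :=
          lintegral_mul_eq_of_forall_setLIntegral_eq hm (measurable_const.add hU)
            (measurable_const.add (hgm.mono hm le_rfl)) hg' hW
      _ ≤ ∫⁻ x, h x ∂μ := lintegral_mono fun x => ENNReal.mul_div_le
      _ = ∫⁻ x, h x ∂μ.trim hm := (lintegral_trim hm hmeas.coe_nnreal_ennreal).symm
      _ < ⊤ := hint.trans one_lt_top

variable {u v : X → ℂ} {A B : Set X}

namespace Admissible

theorem measure_lt_top (hA : Admissible m μ u A) : μ A < ⊤ :=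
  le_self_add.trans_lt hA.2

theorem mono (hA : Admissible m μ u A) (hB : MeasurableSet[m] B) (hBA : B ⊆ A) :
    Admissible m μ u B :=
  ⟨hB, (add_le_add (measure_mono hBA) (lintegral_mono_set hBA)).trans_lt hA.2⟩

theorem congr (hA : Admissible m μ u A) (huv : u =ᵐ[μ] v) : Admissible m μ v A := by
  refine ⟨hA.1, lt_of_eq_of_lt ?_ hA.2⟩
  congr 1
  refine lintegral_congr_ae (ae_restrict_of_ae ?_)
  filter_upwards [huv] with x hx
  rw [hx]

theorem integrableOn (hA : Admissible m μ u A) {f : X → ℂ} (hf : MemLp f 2 μ) :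
    IntegrableOn f A μ :=
  have : IsFiniteMeasure (μ.restrict A) := isFiniteMeasure_restrict.2 hA.measure_lt_top.ne
  (hf.restrict A).integrable one_le_two

theorem memLp_indicator (hm : m ≤ m0) (hA : Admissible m μ u A)
    (hu : AEStronglyMeasurable u μ) : MemLp (A.indicator u) 2 μ := by
  rw [memLp_indicator_iff_restrict (hm A hA.1)]
  exact memLp_two_of_lintegral_enorm_sq_lt_top hu.restrict (le_add_self.trans_lt hA.2)

theorem integrableOn_mul (hm : m ≤ m0) (hA : Admissible m μ u A)
    (hu : AEStronglyMeasurable u μ) {f : X → ℂ} (hf : MemLp f 2 μ) :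
    IntegrableOn (fun x => u x * f x) A μ := by
  rw [← integrable_indicator_iff (hm A hA.1)]
  refine ((hA.memLp_indicator hm hu).integrable_mul hf).congr (ae_of_all _ fun x => ?_)
  simp only [Pi.mul_apply, Set.indicator_mul_left]

end Admissible

theorem exists_admissible_cover (hm : m ≤ m0) {W : X → ℝ≥0∞} (hWm : Measurable[m] W)
    (hWpos : ∀ᵐ x ∂μ, 0 < W x) (hWint : ∫⁻ x, (1 + ‖u x‖ₑ ^ 2) * W x ∂μ < ⊤) :
    ∃ S : ℕ → Set X, (∀ n, Admissible m μ u (S n)) ∧ ∀ᵐ x ∂μ, ∃ n, x ∈ S n := by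
  refine ⟨fun n => {x | 1 ≤ n * W x}, fun n => ?_, ?_⟩
  · have hS : MeasurableSet[m] {x | 1 ≤ n * W x} :=
      measurableSet_le measurable_const (hWm.const_mul _)
    refine ⟨hS, ?_⟩
    calc μ {x | 1 ≤ n * W x} + ∫⁻ x in {x | 1 ≤ n * W x}, ‖u x‖ₑ ^ 2 ∂μ
        = ∫⁻ x in {x | 1 ≤ n * W x}, 1 + ‖u x‖ₑ ^ 2 ∂μ := by
          rw [lintegral_add_left measurable_const, setLIntegral_const, one_mul]
      _ ≤ ∫⁻ x in {x | 1 ≤ n * W x}, (1 + ‖u x‖ₑ ^ 2) * (n * W x) ∂μ :=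
          setLIntegral_mono' (hm _ hS) fun x hx => le_mul_of_one_le_right' hx
      _ ≤ ∫⁻ x, (1 + ‖u x‖ₑ ^ 2) * (n * W x) ∂μ := setLIntegral_le_lintegral _ _
      _ = n * ∫⁻ x, (1 + ‖u x‖ₑ ^ 2) * W x ∂μ := by
          rw [← lintegral_const_mul' _ _ (natCast_ne_top n)]
          congr 1 with x
          ring
      _ < ⊤ := mul_lt_top (natCast_lt_top n) hWint
  · filter_upwards [hWpos] with x hx
    obtain ⟨n, hn⟩ := exists_inv_nat_lt hx.ne'
    have hn0 : (n : ℝ≥0∞) ≠ 0 := by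
      rintro h
      simp [h] at hn
    exact ⟨n, (inv_le_iff_le_mul (fun _ => hn0) fun h => absurd h (natCast_ne_top n)).1 hn.le⟩

theorem ae_eq_of_forall_admissible_setIntegral_eq (hm : m ≤ m0) {S : ℕ → Set X}
    (hS : ∀ n, Admissible m μ u (S n)) (hcover : ∀ᵐ x ∂μ, ∃ n, x ∈ S n) {f₁ f₂ : X → ℂ}
    (hf₁ : AEStronglyMeasurable[m] f₁ μ) (hf₂ : AEStronglyMeasurable[m] f₂ μ)
    (hint₁ : ∀ A, Admissible m μ u A → IntegrableOn f₁ A μ)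
    (hint₂ : ∀ A, Admissible m μ u A → IntegrableOn f₂ A μ)
    (heq : ∀ A, Admissible m μ u A → ∫ x in A, f₁ x ∂μ = ∫ x in A, f₂ x ∂μ) :
    f₁ =ᵐ[μ] f₂ := by
  have hloc : ∀ n, f₁ =ᵐ[μ.restrict (S n)] f₂ := fun n => by
    have : IsFiniteMeasure (μ.restrict (S n)) :=
      isFiniteMeasure_restrict.2 (hS n).measure_lt_top.ne
    have hrestrict : ∀ s, MeasurableSet[m] s →
        (μ.restrict (S n)).restrict s = μ.restrict (s ∩ S n) :=
      fun s hs => Measure.restrict_restrict (hm s hs)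
    have hadm : ∀ s, MeasurableSet[m] s → Admissible m μ u (s ∩ S n) :=
      fun s hs => (hS n).mono (hs.inter (hS n).1) Set.inter_subset_right
    refine ae_eq_of_forall_setIntegral_eq_of_sigmaFinite' hm (fun s hs _ => ?_)
      (fun s hs _ => ?_) (fun s hs _ => ?_) hf₁.restrict hf₂.restrict
    · rw [IntegrableOn, hrestrict s hs]
      exact hint₁ _ (hadm s hs)
    · rw [IntegrableOn, hrestrict s hs]
      exact hint₂ _ (hadm s hs)
    · rw [hrestrict s hs]
      exact heq _ (hadm s hs)
  have hU : MeasurableSet (⋃ n, S n) := MeasurableSet.iUnion fun n => hm _ (hS n).1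
  filter_upwards [hcover, (ae_restrict_iff' hU).1 ((ae_restrict_iUnion_iff S _).2 hloc)]
    with x ⟨n, hn⟩ hx
  exact hx (Set.mem_iUnion.2 ⟨n, hn⟩)


theorem condExpL2_eq_self {𝕜 : Type*} [RCLike 𝕜] (hm : m ≤ m0) {f : Lp 𝕜 2 μ}
    (hf : AEStronglyMeasurable[m] f μ) : (condExpL2 𝕜 𝕜 hm f : Lp 𝕜 2 μ) = f := by
  have : Fact (m ≤ m0) := ⟨hm⟩
  rw [condExpL2]
  exact congrArg Subtype.val (Submodule.orthogonalProjectionOnto_mem_subspace_eq_self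
    (⟨f, mem_lpMeas_iff_aestronglyMeasurable.2 hf⟩ : lpMeas 𝕜 𝕜 m 2 μ))

theorem integral_conj_mul_condExpL2 {𝕜 : Type*} [RCLike 𝕜] (hm : m ≤ m0) {φ : X → 𝕜}
    (hφm : AEStronglyMeasurable[m] φ μ) (hφ : MemLp φ 2 μ) (f : Lp 𝕜 2 μ) :
    ∫ x, conj (φ x) * f x ∂μ = ∫ x, conj (φ x) * (condExpL2 𝕜 𝕜 hm f : Lp 𝕜 2 μ) x ∂μ := by
  have hinner : inner 𝕜 (hφ.toLp φ) f = inner 𝕜 (hφ.toLp φ) (condExpL2 𝕜 𝕜 hm f : Lp 𝕜 2 μ) := by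
    rw [← inner_conj_symm, ← inner_condExpL2_eq_inner_fun hm f _
      (hφm.congr hφ.coeFn_toLp.symm), inner_conj_symm]
  rw [L2.inner_def, L2.inner_def] at hinner
  convert hinner using 1 <;> refine integral_congr_ae ?_ <;>
    filter_upwards [hφ.coeFn_toLp] with x hx <;> simp [hx, mul_comm]

theorem Admissible.setIntegral_ofReal_mul_condExpL2 (hm : m ≤ m0) {v : X → ℝ}
    (hv : StronglyMeasurable[m] v) (hA : Admissible m μ (fun x => (v x : ℂ)) A)
    (f : Lp ℂ 2 μ) :
    ∫ x in A, (v x : ℂ) * f x ∂μ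
      = ∫ x in A, (v x : ℂ) * (condExpL2 ℂ ℂ hm f : Lp ℂ 2 μ) x ∂μ := by
  have hvA : StronglyMeasurable[m] (A.indicator fun x => (v x : ℂ)) :=
    (Complex.continuous_ofReal.comp_stronglyMeasurable hv).indicator hA.1
  have key := integral_conj_mul_condExpL2 hm hvA.aestronglyMeasurable
    (hA.memLp_indicator hm ((Complex.continuous_ofReal.comp_stronglyMeasurable hv).mono
      hm).aestronglyMeasurable) f
  have hind : ∀ h : X → ℂ, (fun x => conj (A.indicator (fun x => (v x : ℂ)) x) * h x)
      = A.indicator fun x => (v x : ℂ) * h x := fun h => by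
    ext x
    by_cases hx : x ∈ A <;> simp [hx]
  rwa [hind, hind, integral_indicator (hm A hA.1), integral_indicator (hm A hA.1)] at key

theorem IsWCE.ae_eq_of_ae_eq_mul (hm : m ≤ m0) {S : ℕ → Set X}
    (hS : ∀ n, Admissible m μ u (S n)) (hcover : ∀ᵐ x ∂μ, ∃ n, x ∈ S n) {f gf h : X → ℂ}
    (hgf : IsWCE m μ u f gf) (hh : StronglyMeasurable[m] h) (hh2 : MemLp h 2 μ)
    (huf : h =ᵐ[μ] fun x => u x * f x) : gf =ᵐ[μ] h :=
  ae_eq_of_forall_admissible_setIntegral_eq hm hS hcover hgf.1.aestronglyMeasurable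
    hh.aestronglyMeasurable (fun _ hA => hA.integrableOn hgf.2.1)
    (fun _ hA => hA.integrableOn hh2) fun A hA => by
      rw [← hgf.2.2 A hA, integral_congr_ae (ae_restrict_of_ae huf)]

theorem IsWCE.ae_eq_ofReal_mul_condExpL2 (hm : m ≤ m0) {S : ℕ → Set X}
    (hS : ∀ n, Admissible m μ u (S n)) (hcover : ∀ᵐ x ∂μ, ∃ n, x ∈ S n) {v : X → ℝ}
    (hv : StronglyMeasurable[m] v) (huv : u =ᵐ[μ] fun x => (v x : ℂ)) {f : Lp ℂ 2 μ}
    {gf : X → ℂ} (hgf : IsWCE m μ u f gf) :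
    gf =ᵐ[μ] fun x => (v x : ℂ) * (condExpL2 ℂ ℂ hm f : Lp ℂ 2 μ) x := by
  have hv' : StronglyMeasurable[m] fun x => (v x : ℂ) :=
    Complex.continuous_ofReal.comp_stronglyMeasurable hv
  refine ae_eq_of_forall_admissible_setIntegral_eq hm hS hcover hgf.1.aestronglyMeasurable
    (hv'.aestronglyMeasurable.mul (aestronglyMeasurable_condExpL2 hm f))
    (fun _ hA => hA.integrableOn hgf.2.1)
    (fun _ hA => (hA.congr huv).integrableOn_mul hm (hv'.mono hm).aestronglyMeasurable
      (Lp.memLp _)) fun A hA => ?_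
  rw [← hgf.2.2 A hA, ← (hA.congr huv).setIntegral_ofReal_mul_condExpL2 hm hv f]
  refine integral_congr_ae (ae_restrict_of_ae ?_)
  filter_upwards [huv] with x hx
  rw [hx]

theorem isWCE_ofReal_mul_condExpL2 (hm : m ≤ m0) {v : X → ℝ} (hv : StronglyMeasurable[m] v)
    (huv : u =ᵐ[μ] fun x => (v x : ℂ)) {f : Lp ℂ 2 μ}
    (hvf : MemLp (fun x => (v x : ℂ) * (condExpL2 ℂ ℂ hm f : Lp ℂ 2 μ) x) 2 μ) :
    IsWCE m μ u f fun x =>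
      (v x : ℂ) * (aestronglyMeasurable_condExpL2 hm f).mk (condExpL2 ℂ ℂ hm f : Lp ℂ 2 μ) x := by
  have hPf := aestronglyMeasurable_condExpL2 (𝕜 := ℂ) hm f
  have hmk : (fun x => (v x : ℂ) * (condExpL2 ℂ ℂ hm f : Lp ℂ 2 μ) x)
      =ᵐ[μ] fun x => (v x : ℂ) * hPf.mk _ x := by
    filter_upwards [hPf.ae_eq_mk] with x hx
    rw [hx]
  refine ⟨(Complex.continuous_ofReal.comp_stronglyMeasurable hv).mul hPf.stronglyMeasurable_mk,
    hvf.ae_eq hmk, fun A hA => ?_⟩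
  rw [integral_congr_ae (ae_restrict_of_ae (huv.mono fun x hx => by rw [hx])),
    (hA.congr huv).setIntegral_ofReal_mul_condExpL2 hm hv f]
  exact integral_congr_ae (ae_restrict_of_ae hmk)

theorem exists_pos_ofReal_memLp_two (hm : m ≤ m0) (hu : AEStronglyMeasurable u μ)
    {W : X → ℝ≥0∞} (hWm : Measurable[m] W) (hWtop : ∀ x, W x ≠ ⊤) (hWpos : ∀ᵐ x ∂μ, 0 < W x)
    (hWint : ∫⁻ x, (1 + ‖u x‖ₑ ^ 2) * W x ∂μ < ⊤) :
    ∃ w : X → ℝ, StronglyMeasurable[m] w ∧ (∀ᵐ x ∂μ, 0 < w x) ∧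
      MemLp (fun x => (w x : ℂ)) 2 μ ∧ MemLp (fun x => conj (u x) * w x) 2 μ := by
  have hw : StronglyMeasurable[m] fun x => √(W x).toReal :=
    hWm.ennreal_toReal.sqrt.stronglyMeasurable
  have hwC : AEStronglyMeasurable (fun x => ((√(W x).toReal : ℝ) : ℂ)) μ :=
    ((Complex.continuous_ofReal.comp_stronglyMeasurable hw).mono hm).aestronglyMeasurable
  have hnorm : ∀ x, ‖((√(W x).toReal : ℝ) : ℂ)‖ₑ ^ 2 = W x :=
    fun x => enorm_ofReal_sqrt_toReal_sq (hWtop x)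
  have hconj : AEStronglyMeasurable (fun x => conj (u x)) μ :=
    Complex.continuous_conj.comp_aestronglyMeasurable hu
  refine ⟨_, hw, ?_, memLp_two_of_lintegral_enorm_sq_lt_top hwC ?_,
    memLp_two_of_lintegral_enorm_sq_lt_top (hconj.mul hwC) ?_⟩
  · filter_upwards [hWpos] with x hx
    exact Real.sqrt_pos.2 (toReal_pos hx.ne' (hWtop x))
  · simp_rw [hnorm]
    exact (lintegral_mono fun x => le_mul_of_one_le_left' le_self_add).trans_lt hWint
  · simp_rw [enorm_mul, mul_pow, RCLike.enorm_conj, hnorm]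
    exact (lintegral_mono fun x => by gcongr; exact le_add_self).trans_lt hWint

theorem IsWCE.exists_ofReal_ae_eq_of_ae_eq_conj_mul (hm : m ≤ m0) {S : ℕ → Set X}
    (hS : ∀ n, Admissible m μ u (S n)) (hcover : ∀ᵐ x ∂μ, ∃ n, x ∈ S n) {w : X → ℝ}
    (hw : StronglyMeasurable[m] w) (hwpos : ∀ᵐ x ∂μ, 0 < w x) {f gf : X → ℂ}
    (hf : f =ᵐ[μ] fun x => (w x : ℂ)) (hgf : IsWCE m μ u f gf)
    (hgf_eq : gf =ᵐ[μ] fun x => conj (u x) * w x) :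
    ∃ v : X → ℝ, StronglyMeasurable[m] v ∧ u =ᵐ[μ] fun x => (v x : ℂ) := by
  have hconj : (fun x => conj (gf x)) =ᵐ[μ] fun x => u x * f x := by
    filter_upwards [hgf_eq, hf] with x h1 h2
    rw [h1, h2, map_mul, Complex.conj_conj, Complex.conj_ofReal]
  have hreal : gf =ᵐ[μ] fun x => conj (gf x) :=
    hgf.ae_eq_of_ae_eq_mul hm hS hcover (Complex.continuous_conj.comp_stronglyMeasurable hgf.1)
      hgf.2.1.star hconj
  refine ⟨fun x => (gf x).re / w x,
    ((Complex.measurable_re.comp hgf.1.measurable).div hw.measurable).stronglyMeasurable, ?_⟩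
  filter_upwards [hgf_eq, hreal, hwpos] with x h1 h2 h3
  have hre : ((gf x).re : ℂ) = gf x := Complex.conj_eq_iff_re.1 h2.symm
  calc u x = conj (gf x) / w x := by
        rw [h1, map_mul, Complex.conj_conj, Complex.conj_ofReal,
          mul_div_cancel_right₀ _ (Complex.ofReal_ne_zero.2 h3.ne')]
    _ = ((gf x).re / w x : ℝ) := by rw [← h2, ← hre]; push_cast; rfl

end

theorem stmt8_general (m : MeasurableSpace X) [m0 : MeasurableSpace X] (hm : m ≤ m0)
    (μ : Measure X) [SigmaFinite (μ.trim hm)]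
    (u : X → ℂ) (hu : Measurable u)
    (g : X → ℝ≥0∞) (hgm : Measurable[m] g)
    (hg : ∀ A : Set X, MeasurableSet[m] A →
      ∫⁻ x in A, (‖u x‖₊ : ℝ≥0∞) ^ 2 ∂μ = ∫⁻ x in A, g x ∂μ)
    (hgfin : ∀ᵐ x ∂μ, g x < ⊤) :
    ((∀ f : Lp ℂ 2 μ,
        ((∃ gf : X → ℂ, IsWCE m μ u (f : X → ℂ) gf) ↔
          MemLp (fun x => (starRingEnd ℂ) (u x) * (↑(condExpL2 ℂ ℂ hm f) : Lp ℂ 2 μ) x) 2 μ)) ∧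
      (∀ (f : Lp ℂ 2 μ) (gf : X → ℂ), IsWCE m μ u (f : X → ℂ) gf →
        gf =ᵐ[μ] fun x =>
          (starRingEnd ℂ) (u x) * (↑(condExpL2 ℂ ℂ hm f) : Lp ℂ 2 μ) x)) ↔
    (∃ u' : X → ℝ, StronglyMeasurable[m] u' ∧ u =ᵐ[μ] fun x => (u' x : ℂ)) := by
  obtain ⟨W, hWm, hWtop, hWpos, hWint⟩ :=
    exists_pos_lintegral_one_add_mul_lt_top hm (hu.enorm.pow_const 2) hgm hg hgfin
  obtain ⟨S, hS, hcover⟩ := exists_admissible_cover hm hWm hWpos hWint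
  constructor
  · rintro ⟨hdom, hEM⟩
    obtain ⟨w, hw, hwpos, hw2, huw⟩ :=
      exists_pos_ofReal_memLp_two hm hu.aestronglyMeasurable hWm hWtop hWpos hWint
    have hPf : (condExpL2 ℂ ℂ hm (hw2.toLp _) : Lp ℂ 2 μ) = hw2.toLp _ :=
      condExpL2_eq_self hm
        ((Complex.continuous_ofReal.comp_stronglyMeasurable hw).aestronglyMeasurable.congr
          hw2.coeFn_toLp.symm)
    have hconj_mul : (fun x => conj (u x) * w x) =ᵐ[μ] fun x => conj (u x) * hw2.toLp _ x := by
      filter_upwards [hw2.coeFn_toLp] with x hx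
      rw [hx]
    obtain ⟨gf, hgf⟩ := (hdom _).2 (by rw [hPf]; exact huw.ae_eq hconj_mul)
    exact hgf.exists_ofReal_ae_eq_of_ae_eq_conj_mul hm hS hcover hw hwpos hw2.coeFn_toLp
      ((hEM _ gf hgf).trans (by rw [hPf]; exact hconj_mul.symm))
  · rintro ⟨v, hv, huv⟩
    have hconj : ∀ φ : X → ℂ, (fun x => (v x : ℂ) * φ x) =ᵐ[μ] fun x => conj (u x) * φ x :=
      fun φ => by
        filter_upwards [huv] with x hx
        rw [hx, Complex.conj_ofReal]
    have hEM : ∀ (f : Lp ℂ 2 μ) (gf : X → ℂ), IsWCE m μ u f gf →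
        gf =ᵐ[μ] fun x => conj (u x) * (condExpL2 ℂ ℂ hm f : Lp ℂ 2 μ) x :=
      fun f gf hgf => (hgf.ae_eq_ofReal_mul_condExpL2 hm hS hcover hv huv).trans (hconj _)
    exact ⟨fun f => ⟨fun ⟨gf, hgf⟩ => hgf.2.1.ae_eq (hEM f gf hgf),
      fun hmem => ⟨_, isWCE_ofReal_mul_condExpL2 hm hv huv (hmem.ae_eq (hconj _).symm)⟩⟩, hEM⟩

/-- With `E(|u|²) < ∞` a.e., `EM_u` is self-adjoint (its domain coincides with
the domain `{f : ū·(P f) ∈ L²}` of its adjoint and `EM_u f = ū·(P f)` a.e. there) iff `u` is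
a.e. equal to a real-valued `m`-measurable function.  Here `P = condexpL2` is the orthogonal
projection onto the `m`-measurable elements of `L²(μ)`. -/
theorem stmt8 (m : MeasurableSpace X) [m0 : MeasurableSpace X] (hm : m ≤ m0)
    (μ : Measure X) [SigmaFinite μ] [SigmaFinite (μ.trim hm)]
    (u : X → ℂ) (hu : Measurable u)
    (g : X → ℝ≥0∞) (hgm : Measurable[m] g)
    (hg : ∀ A : Set X, MeasurableSet[m] A →
      ∫⁻ x in A, (‖u x‖₊ : ℝ≥0∞) ^ 2 ∂μ = ∫⁻ x in A, g x ∂μ)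
    (hgfin : ∀ᵐ x ∂μ, g x < ⊤) :
    ((∀ f : Lp ℂ 2 μ,
        ((∃ gf : X → ℂ, IsWCE m μ u (f : X → ℂ) gf) ↔
          MemLp (fun x => (starRingEnd ℂ) (u x) * (↑(condExpL2 ℂ ℂ hm f) : Lp ℂ 2 μ) x) 2 μ)) ∧
      (∀ (f : Lp ℂ 2 μ) (gf : X → ℂ), IsWCE m μ u (f : X → ℂ) gf →
        gf =ᵐ[μ] fun x =>
          (starRingEnd ℂ) (u x) * (↑(condExpL2 ℂ ℂ hm f) : Lp ℂ 2 μ) x)) ↔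
    (∃ u' : X → ℝ, StronglyMeasurable[m] u' ∧ u =ᵐ[μ] fun x => (u' x : ℂ)) :=
  stmt8_general m (m0 := m0) hm μ u hu g hgm hg hgfin
end
end

section
/- Assume E(|u|²) < ∞ μ-a.e., let v = E(u), and assume {x : v(x) ≠ 0} = {x : E(|u|²)(x) > 0} up to μ-null sets. Then the following are equivalent: (a) D of the operator f ↦ E(|u|²)·(EM_u f) equals the domain of f ↦ ū·v·(EM_u f) (both taken inside D(EM_u) with values required in L²(μ)) and the two operators agree μ-a.e. on it (i.e., EM_u is quasinormal: EM_u|EM_u|² = |EM_u|²EM_u); (b) ū·v = E(|u|²) μ-a.e. on X. -/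
open MeasureTheory Filter ENNReal NNReal

noncomputable section

variable {X : Type*}

/-!
The condition `ū·v = E(|u|²)` makes the two operators equal outright, so only its necessity
needs an argument. Test quasinormality on `f = 1_A` for `m`-measurable sets `A` of finite measure
on which `E(|u|²)` and `v` are bounded: then `EM_u 1_A = 1_A v`, and equality of the two
operators gives `E(|u|²) v = ū v v` a.e. on `A`. Such sets exhaust `{E(|u|²) < ∞}`, so
`E(|u|²) = ū v` a.e. off `{v = 0}`, and on `{v = 0}` both sides vanish by the hypothesis on the
supports.
-/

theorem memLp_indicator_of_forall_norm_le {α E : Type*} [MeasurableSpace α] {μ : Measure α}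
    [NormedAddCommGroup E] {p : ℝ≥0∞} {A : Set α} (hA : MeasurableSet A) (hμA : μ A ≠ ∞)
    {f : α → E} (hf : AEStronglyMeasurable f μ) {C : ℝ} (hC : ∀ x ∈ A, ‖f x‖ ≤ C) :
    MemLp (A.indicator f) p μ := by
  rw [memLp_indicator_iff_restrict hA]
  have : IsFiniteMeasure (μ.restrict A) :=
    ⟨by rwa [Measure.restrict_apply_univ, lt_top_iff_ne_top]⟩
  exact MemLp.of_bound hf.restrict C ((ae_restrict_iff' hA).2 (ae_of_all _ hC))

section Admissible

variable {m : MeasurableSpace X} [m0 : MeasurableSpace X] {μ : Measure X} {u : X → ℂ}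

theorem Admissible.inter_of_measurableSet {A B : Set X} (hA : MeasurableSet[m] A)
    (hB : Admissible m μ u B) : Admissible m μ u (A ∩ B) :=
  ⟨hA.inter hB.1, lt_of_le_of_lt (add_le_add (measure_mono Set.inter_subset_right)
    (lintegral_mono_set Set.inter_subset_right)) hB.2⟩

theorem isWCE_indicator_one (hm : m ≤ m0) {v : X → ℂ} (hvm : StronglyMeasurable[m] v)
    (hv : ∀ A : Set X, Admissible m μ u A → ∫ x in A, u x ∂μ = ∫ x in A, v x ∂μ)
    {A : Set X} (hA : MeasurableSet[m] A) (hAv : MemLp (A.indicator v) 2 μ) :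
    IsWCE m μ u (A.indicator fun _ => 1) (A.indicator v) := by
  refine ⟨hvm.indicator hA, hAv, fun B hB => ?_⟩
  have restrict_indicator (w : X → ℂ) :
      ∫ x in B, A.indicator w x ∂μ = ∫ x in A ∩ B, w x ∂μ := by
    rw [integral_indicator (hm _ hA), Measure.restrict_restrict (hm _ hA)]
  calc ∫ x in B, u x * A.indicator (fun _ => (1 : ℂ)) x ∂μ
      = ∫ x in B, A.indicator u x ∂μ := by
        congr 1 with x
        by_cases hx : x ∈ A <;> simp [hx]
    _ = ∫ x in A ∩ B, u x ∂μ := restrict_indicator u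
    _ = ∫ x in A ∩ B, v x ∂μ := hv _ (hB.inter_of_measurableSet hA)
    _ = ∫ x in B, A.indicator v x ∂μ := (restrict_indicator v).symm

end Admissible

theorem exists_seq_bounded_exhaustion {m : MeasurableSpace X} [m0 : MeasurableSpace X]
    (hm : m ≤ m0) (μ : Measure X) [SigmaFinite (μ.trim hm)] {g : X → ℝ≥0∞}
    (hgm : Measurable[m] g) {v : X → ℂ} (hvm : StronglyMeasurable[m] v) :
    ∃ A : ℕ → Set X, (∀ n, MeasurableSet[m] (A n)) ∧ (∀ n, μ (A n) < ⊤) ∧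
      (∀ n, ∀ x ∈ A n, g x ≤ n ∧ ‖v x‖ ≤ n) ∧ ∀ x, g x < ⊤ → ∃ n, x ∈ A n := by
  set S := spanningSets (μ.trim hm)
  refine ⟨fun n => S n ∩ {x | g x ≤ n} ∩ {x | ‖v x‖ ≤ n}, fun n => ?_, fun n => ?_,
    fun n x hx => ⟨hx.1.2, hx.2⟩, fun x hx => ?_⟩
  · exact ((measurableSet_spanningSets _ n).inter (hgm measurableSet_Iic)).inter
      (hvm.norm.measurable measurableSet_Iic)
  · calc μ (S n ∩ {x | g x ≤ n} ∩ {x | ‖v x‖ ≤ n}) ≤ μ (S n) :=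
          measure_mono fun x hx => hx.1.1
      _ = μ.trim hm (S n) := (trim_measurableSet_eq hm (measurableSet_spanningSets _ n)).symm
      _ < ⊤ := measure_spanningSets_lt_top _ n
  · obtain ⟨k, hk⟩ := Set.mem_iUnion.1 ((iUnion_spanningSets (μ.trim hm)).symm ▸ Set.mem_univ x)
    obtain ⟨n₁, hn₁⟩ := ENNReal.exists_nat_gt hx.ne
    obtain ⟨n₂, hn₂⟩ := exists_nat_ge ‖v x‖
    refine ⟨max k (max n₁ n₂), ⟨⟨monotone_spanningSets _ (le_max_left _ _) hk, ?_⟩, ?_⟩⟩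
    · exact hn₁.le.trans (Nat.cast_le.2 ((le_max_left _ _).trans (le_max_right _ _)))
    · exact hn₂.trans (Nat.cast_le.2 ((le_max_right _ _).trans (le_max_right _ _)))

theorem ae_conj_mul_eq_of_forall_ae_eq {m : MeasurableSpace X} [m0 : MeasurableSpace X]
    (hm : m ≤ m0) {μ : Measure X} [SigmaFinite (μ.trim hm)] {u : X → ℂ}
    {g : X → ℝ≥0∞} (hgm : Measurable[m] g)
    (hgfin : ∀ᵐ x ∂μ, g x < ⊤) {v : X → ℂ} (hvm : StronglyMeasurable[m] v)
    (hv : ∀ A : Set X, Admissible m μ u A → ∫ x in A, u x ∂μ = ∫ x in A, v x ∂μ)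
    (hS : ∀ᵐ x ∂μ, (v x ≠ 0 ↔ g x ≠ 0))
    (heq : ∀ f gf : X → ℂ, MemLp f 2 μ → IsWCE m μ u f gf →
      MemLp (fun x => ((g x).toReal : ℂ) * gf x) 2 μ →
      (fun x => ((g x).toReal : ℂ) * gf x) =ᵐ[μ] fun x => (starRingEnd ℂ) (u x) * v x * gf x) :
    ∀ᵐ x ∂μ, (starRingEnd ℂ) (u x) * v x = ((g x).toReal : ℂ) := by
  obtain ⟨A, hAm, hAfin, hAbdd, hAcover⟩ := exists_seq_bounded_exhaustion hm μ hgm hvm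
  have hA n := hm _ (hAm n)
  have hAv n : MemLp ((A n).indicator v) 2 μ :=
    memLp_indicator_of_forall_norm_le (hA n) (hAfin n).ne (hvm.mono hm).aestronglyMeasurable
      fun x hx => (hAbdd n x hx).2
  have hgAv n : MemLp (fun x => ((g x).toReal : ℂ) * (A n).indicator v x) 2 μ := by
    have hg_toReal_le x (hx : x ∈ A n) : ‖((g x).toReal : ℂ)‖ ≤ n := by
      rw [Complex.norm_real, Real.norm_of_nonneg ENNReal.toReal_nonneg]
      simpa using ENNReal.toReal_mono (by simp) (hAbdd n x hx).1
    rw [show (fun x => ((g x).toReal : ℂ) * (A n).indicator v x) =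
        (A n).indicator fun x => ((g x).toReal : ℂ) * v x from
      funext fun x => (Set.indicator_mul_right (A n) (fun x => ((g x).toReal : ℂ)) v).symm]
    refine memLp_indicator_of_forall_norm_le (hA n) (hAfin n).ne ?_ (C := n * n) fun x hx => ?_
    · exact ((Complex.measurable_ofReal.comp (hgm.mono hm le_rfl).ennreal_toReal)
        |>.aestronglyMeasurable).mul (hvm.mono hm).aestronglyMeasurable
    · rw [norm_mul]
      exact mul_le_mul (hg_toReal_le x hx) (hAbdd n x hx).2 (norm_nonneg _) n.cast_nonneg
  have on_pieces : ∀ᵐ x ∂μ, ∀ n, x ∈ A n →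
      ((g x).toReal : ℂ) * v x = (starRingEnd ℂ) (u x) * v x * v x := by
    refine ae_all_iff.2 fun n => ?_
    have h1A : MemLp ((A n).indicator fun _ => (1 : ℂ)) 2 μ :=
      memLp_indicator_of_forall_norm_le (hA n) (hAfin n).ne aestronglyMeasurable_const
        (C := 1) fun _ _ => by simp
    filter_upwards [heq _ _ h1A (isWCE_indicator_one hm hvm hv (hAm n) (hAv n)) (hgAv n)]
      with x hx hxA
    simpa [Set.indicator_of_mem hxA] using hx
  filter_upwards [on_pieces, hgfin, hS] with x hx hgx hSx
  by_cases hv0 : v x = 0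
  · have hg0 : g x = 0 := not_not.1 fun h => hSx.2 h hv0
    simp [hv0, hg0]
  · obtain ⟨n, hn⟩ := hAcover x hgx
    exact (mul_right_cancel₀ hv0 (hx n hn)).symm

theorem stmt16_general (m : MeasurableSpace X) [m0 : MeasurableSpace X] (hm : m ≤ m0)
    (μ : Measure X) [SigmaFinite (μ.trim hm)]
    (u : X → ℂ)
    (g : X → ℝ≥0∞) (hgm : Measurable[m] g)
    (hgfin : ∀ᵐ x ∂μ, g x < ⊤)
    (v : X → ℂ) (hvm : StronglyMeasurable[m] v)
    (hv : ∀ A : Set X, Admissible m μ u A → ∫ x in A, u x ∂μ = ∫ x in A, v x ∂μ)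
    (hS : ∀ᵐ x ∂μ, (v x ≠ 0 ↔ g x ≠ 0)) :
    ((∀ f : X → ℂ, MemLp f 2 μ →
        ((∃ gf : X → ℂ, IsWCE m μ u f gf ∧
            MemLp (fun x => ((g x).toReal : ℂ) * gf x) 2 μ) ↔
          (∃ gf : X → ℂ, IsWCE m μ u f gf ∧
            MemLp (fun x => (starRingEnd ℂ) (u x) * v x * gf x) 2 μ))) ∧
      (∀ f gf : X → ℂ, MemLp f 2 μ → IsWCE m μ u f gf →
        MemLp (fun x => ((g x).toReal : ℂ) * gf x) 2 μ →
        (fun x => ((g x).toReal : ℂ) * gf x) =ᵐ[μ]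
          fun x => (starRingEnd ℂ) (u x) * v x * gf x)) ↔
    (∀ᵐ x ∂μ, (starRingEnd ℂ) (u x) * v x = ((g x).toReal : ℂ)) := by
  refine ⟨fun h => ae_conj_mul_eq_of_forall_ae_eq hm hgm hgfin hvm hv hS h.2, fun h => ?_⟩
  have heq (gf : X → ℂ) : (fun x => ((g x).toReal : ℂ) * gf x) =ᵐ[μ]
      fun x => (starRingEnd ℂ) (u x) * v x * gf x :=
    h.mono fun x hx => by simp only [hx]
  exact ⟨fun f _ => exists_congr fun gf => and_congr_right fun _ => memLp_congr_ae (heq gf),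
    fun f gf _ _ _ => heq gf⟩

/-- With `E(|u|²) < ∞` a.e., `v = E(u)` and `{v ≠ 0} = {E(|u|²) > 0}` up to
null sets, `EM_u` is quasinormal (i.e. the operators `f ↦ E(|u|²)·(EM_u f)` and
`f ↦ ū·v·(EM_u f)` have the same domain inside `D(EM_u)` and agree a.e. on it) iff
`ū·v = E(|u|²)` a.e. on `X`. -/
theorem stmt16 (m : MeasurableSpace X) [m0 : MeasurableSpace X] (hm : m ≤ m0)
    (μ : Measure X) [SigmaFinite μ] [SigmaFinite (μ.trim hm)]
    (u : X → ℂ) (hu : Measurable u)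
    (g : X → ℝ≥0∞) (hgm : Measurable[m] g)
    (hg : ∀ A : Set X, MeasurableSet[m] A →
      ∫⁻ x in A, (‖u x‖₊ : ℝ≥0∞) ^ 2 ∂μ = ∫⁻ x in A, g x ∂μ)
    (hgfin : ∀ᵐ x ∂μ, g x < ⊤)
    (v : X → ℂ) (hvm : StronglyMeasurable[m] v)
    (hv : ∀ A : Set X, Admissible m μ u A → ∫ x in A, u x ∂μ = ∫ x in A, v x ∂μ)
    (hS : ∀ᵐ x ∂μ, (v x ≠ 0 ↔ g x ≠ 0)) :
    ((∀ f : X → ℂ, MemLp f 2 μ →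
        ((∃ gf : X → ℂ, IsWCE m μ u f gf ∧
            MemLp (fun x => ((g x).toReal : ℂ) * gf x) 2 μ) ↔
          (∃ gf : X → ℂ, IsWCE m μ u f gf ∧
            MemLp (fun x => (starRingEnd ℂ) (u x) * v x * gf x) 2 μ))) ∧
      (∀ f gf : X → ℂ, MemLp f 2 μ → IsWCE m μ u f gf →
        MemLp (fun x => ((g x).toReal : ℂ) * gf x) 2 μ →
        (fun x => ((g x).toReal : ℂ) * gf x) =ᵐ[μ]
          fun x => (starRingEnd ℂ) (u x) * v x * gf x)) ↔
    (∀ᵐ x ∂μ, (starRingEnd ℂ) (u x) * v x = ((g x).toReal : ℂ)) :=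
  stmt16_general m (m0 := m0) hm μ u g hgm hgfin v hvm hv hS
end
end
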